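/- Let E : ℝ → ℝ be twice continuously differentiable, let φ : ℝ² → ℝ be twice continuously differentiable, and let v₊, v₋ : ℝ² → ℝ be continuously differentiable, such that the equations of motion ∂₊∂₋φ + ∂₋v₊ + ∂₊v₋ = 0, (1+E′(v₊v₋))v₋ + ∂₋φ = 0, and (1+E′(v₊v₋))v₊ + ∂₊φ = 0 hold everywhere on ℝ². Write ν := v₊v₋ and define T₊₊ = (E′(ν)² − 1)v₊², T₋₋ = (E′(ν)² − 1)v₋², and T₊₋ = 2(E′(ν)ν − E(ν)). Then ∂₋T₊₊ + ∂₊T₊₋ = 0 and ∂₊T₋₋ + ∂₋T₊₋ = 0 everywhere on ℝ². -/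

import Mathlib

/-- Light-cone partial derivative `∂₊` on the worldsheet `ℝ²`. -/
noncomputable def dplus (h : ℝ × ℝ → ℝ) (p : ℝ × ℝ) : ℝ := fderiv ℝ h p (1, 0)

/-- Light-cone partial derivative `∂₋` on the worldsheet `ℝ²`. -/
noncomputable def dminus (h : ℝ × ℝ → ℝ) (p : ℝ × ℝ) : ℝ := fderiv ℝ h p (0, 1)

/-!
Write `g = E′(ν)`. Subtracting the derivatives of the two algebraic equations of motion
`(1 + g) v∓ = -∂∓φ` from the field equation of `φ`, and using `∂₊∂₋φ = ∂₋∂₊φ`, gives the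
first-order relations `∂₋v₊ = ∂₊(g v₋)` and `∂₊v₋ = ∂₋(g v₊)`. Since `T₊₊ = (g v₊)² - v₊²`,
these turn `∂₋T₊₊` into `-2ν ∂₊g`, while `T₊₋ = 2(E′(ν)ν - E(ν))` is a Legendre transform, so
`∂₊T₊₋ = 2ν ∂₊g`. The other component follows by exchanging `+` and `-`.
-/

variable {F : Type*} [NormedAddCommGroup F] [NormedSpace ℝ F]

/-- `T₊₊` for `v = v₊` and `T₋₋` for `v = v₋`, with `ν = v₊v₋`. -/
noncomputable def emTensorDiag (E : ℝ → ℝ) (ν v : F → ℝ) (q : F) : ℝ :=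
  (deriv E (ν q) ^ 2 - 1) * v q ^ 2

/-- `T₊₋`, with `ν = v₊v₋`. -/
noncomputable def emTensorMixed (E : ℝ → ℝ) (ν : F → ℝ) (q : F) : ℝ :=
  2 * (deriv E (ν q) * ν q - E (ν q))

theorem fderiv_fderiv_apply_comm {φ : F → ℝ} {p : F} (hφ : ContDiffAt ℝ 2 φ p) (u w : F) :
    fderiv ℝ (fun q => fderiv ℝ φ q w) p u = fderiv ℝ (fun q => fderiv ℝ φ q u) p w := by
  have hD : DifferentiableAt ℝ (fderiv ℝ φ) p :=
    (hφ.fderiv_right (m := 1) (by norm_num)).differentiableAt one_ne_zero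
  simp only [fderiv_clm_apply hD (differentiableAt_const _), fderiv_fun_const, Pi.zero_apply,
    ContinuousLinearMap.comp_zero, zero_add, ContinuousLinearMap.flip_apply]
  exact hφ.isSymmSndFDerivAt (by simp) u w

theorem fderiv_apply_eq_fderiv_mul_of_eom {φ g v₁ v₂ : F → ℝ} {p u w : F}
    (hg : DifferentiableAt ℝ g p) (hv₂ : DifferentiableAt ℝ v₂ p)
    (h₁ : fderiv ℝ (fun q => fderiv ℝ φ q w) p u + fderiv ℝ v₁ p w + fderiv ℝ v₂ p u = 0)
    (h₂ : ∀ q, (1 + g q) * v₂ q + fderiv ℝ φ q w = 0) :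
    fderiv ℝ v₁ p w = fderiv ℝ (fun q => g q * v₂ q) p u := by
  have hfun : (fun q => v₂ q + g q * v₂ q) = fun q => -fderiv ℝ φ q w :=
    funext fun q => by linear_combination h₂ q
  have h := congrArg (fun f => fderiv ℝ f p u) hfun
  rw [fderiv_fun_add hv₂ (by fun_prop), fderiv_fun_neg] at h
  simp only [add_apply, neg_apply] at h
  linarith

theorem fderiv_emTensorDiag_apply {E : ℝ → ℝ} {ν v₁ v₂ : F → ℝ} {p u w : F}
    (hg : DifferentiableAt ℝ (fun q => deriv E (ν q)) p)
    (hv₁ : DifferentiableAt ℝ v₁ p) (hv₂ : DifferentiableAt ℝ v₂ p)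
    (ha : fderiv ℝ v₁ p w = fderiv ℝ (fun q => deriv E (ν q) * v₂ q) p u)
    (hb : fderiv ℝ v₂ p u = fderiv ℝ (fun q => deriv E (ν q) * v₁ q) p w) :
    fderiv ℝ (emTensorDiag E ν v₁) p w =
      -2 * v₁ p * v₂ p * fderiv ℝ (fun q => deriv E (ν q)) p u := by
  set g := fun q => deriv E (ν q)
  have hfun : emTensorDiag E ν v₁ = fun q => (g q * v₁ q) ^ 2 - v₁ q ^ 2 :=
    funext fun q => by simp only [emTensorDiag, g]; ring
  rw [fderiv_fun_mul hg hv₂] at ha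
  rw [fderiv_fun_mul hg hv₁] at hb
  rw [hfun, fderiv_fun_sub (by fun_prop) (by fun_prop), fderiv_fun_pow _ (by fun_prop),
    fderiv_fun_pow _ hv₁, fderiv_fun_mul hg hv₁]
  simp only [sub_apply, add_apply, smul_apply, smul_eq_mul] at ha hb ⊢
  linear_combination (-2 * v₁ p) * ha - (2 * g p * v₁ p) * hb

theorem hasFDerivAt_emTensorMixed {E : ℝ → ℝ} {ν : F → ℝ} {p : F}
    (hE : DifferentiableAt ℝ E (ν p)) (hE' : DifferentiableAt ℝ (deriv E) (ν p))
    (hν : DifferentiableAt ℝ ν p) :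
    HasFDerivAt (emTensorMixed E ν) ((2 * ν p) • fderiv ℝ (fun q => deriv E (ν q)) p) p := by
  have hg := hE'.hasDerivAt.comp_hasFDerivAt p hν.hasFDerivAt
  refine (((hg.mul hν.hasFDerivAt).sub
    (hE.hasDerivAt.comp_hasFDerivAt p hν.hasFDerivAt)).const_mul 2).congr_fderiv ?_
  rw [show (fun q => deriv E (ν q)) = deriv E ∘ ν from rfl, hg.fderiv]
  ext v
  simp only [Function.comp_apply, add_sub_cancel_left, smul_apply, smul_eq_mul]
  ring

theorem fderiv_emTensorDiag_add_fderiv_emTensorMixed {E : ℝ → ℝ} {ν v₁ v₂ : F → ℝ} {p u w : F}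
    (hE : DifferentiableAt ℝ E (ν p)) (hE' : DifferentiableAt ℝ (deriv E) (ν p))
    (hν : DifferentiableAt ℝ ν p) (hv₁ : DifferentiableAt ℝ v₁ p)
    (hv₂ : DifferentiableAt ℝ v₂ p) (hνp : ν p = v₁ p * v₂ p)
    (ha : fderiv ℝ v₁ p w = fderiv ℝ (fun q => deriv E (ν q) * v₂ q) p u)
    (hb : fderiv ℝ v₂ p u = fderiv ℝ (fun q => deriv E (ν q) * v₁ q) p w) :
    fderiv ℝ (emTensorDiag E ν v₁) p w + fderiv ℝ (emTensorMixed E ν) p u = 0 := by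
  have hg : DifferentiableAt ℝ (fun q => deriv E (ν q)) p := hE'.comp p hν
  rw [fderiv_emTensorDiag_apply hg hv₁ hv₂ ha hb, (hasFDerivAt_emTensorMixed hE hE' hν).fderiv,
    smul_apply, smul_eq_mul, hνp]
  ring

/-- On-shell conservation of the energy–momentum tensor
`T±± = (E′(ν)² − 1)v±²`, `T₊₋ = 2(E′(ν)ν − E(ν))` of the auxiliary-field
deformation of a single free boson. -/
theorem stmt13 (E : ℝ → ℝ) (hE : ContDiff ℝ 2 E)
    (φ : ℝ × ℝ → ℝ) (hφ : ContDiff ℝ 2 φ)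
    (vp vm : ℝ × ℝ → ℝ) (hvp : ContDiff ℝ 1 vp) (hvm : ContDiff ℝ 1 vm)
    (heom1 : ∀ p : ℝ × ℝ,
      dplus (fun q => dminus φ q) p + dminus vp p + dplus vm p = 0)
    (heom2 : ∀ p : ℝ × ℝ,
      (1 + deriv E (vp p * vm p)) * vm p + dminus φ p = 0)
    (heom3 : ∀ p : ℝ × ℝ,
      (1 + deriv E (vp p * vm p)) * vp p + dplus φ p = 0)
    (Tpp Tmm Tpm : ℝ × ℝ → ℝ)
    (hTpp : Tpp = fun p => ((deriv E (vp p * vm p)) ^ 2 - 1) * vp p ^ 2)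
    (hTmm : Tmm = fun p => ((deriv E (vp p * vm p)) ^ 2 - 1) * vm p ^ 2)
    (hTpm : Tpm = fun p =>
      2 * (deriv E (vp p * vm p) * (vp p * vm p) - E (vp p * vm p))) :
    (∀ p : ℝ × ℝ, dminus Tpp p + dplus Tpm p = 0) ∧
    (∀ p : ℝ × ℝ, dplus Tmm p + dminus Tpm p = 0) := by
  simp only [dplus, dminus] at heom1 heom2 heom3 ⊢
  subst hTpp hTmm hTpm
  have hE' := hE.differentiable_deriv_two
  have hvp' := hvp.differentiable one_ne_zero
  have hvm' := hvm.differentiable one_ne_zero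
  have hν : Differentiable ℝ fun q => vp q * vm q := hvp'.mul hvm'
  have hg : Differentiable ℝ fun q => deriv E (vp q * vm q) := hE'.comp hν
  have heom1' (p : ℝ × ℝ) :
      fderiv ℝ (fun q => fderiv ℝ φ q (1, 0)) p (0, 1) + fderiv ℝ vm p (1, 0)
        + fderiv ℝ vp p (0, 1) = 0 := by
    rw [fderiv_fderiv_apply_comm hφ.contDiffAt]
    linarith [heom1 p]
  have ha (p : ℝ × ℝ) := fderiv_apply_eq_fderiv_mul_of_eom (hg p) (hvm' p) (heom1 p) heom2
  have hb (p : ℝ × ℝ) := fderiv_apply_eq_fderiv_mul_of_eom (hg p) (hvp' p) (heom1' p) heom3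
  refine ⟨fun p => ?_, fun p => ?_⟩
  · exact fderiv_emTensorDiag_add_fderiv_emTensorMixed (hE.differentiable two_ne_zero _) (hE' _)
      (hν p) (hvp' p) (hvm' p) rfl (ha p) (hb p)
  · exact fderiv_emTensorDiag_add_fderiv_emTensorMixed (hE.differentiable two_ne_zero _) (hE' _)
      (hν p) (hvm' p) (hvp' p) (mul_comm _ _) (hb p) (ha p)
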